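/- Let X be a real-valued random variable with distribution F ∈ 𝒟 whose tail is positive everywhere, let Θ be a non-negative random variable, non-degenerate at zero, with distribution G, and let H be the distribution of the product ΘX. If Assumption A3' holds and \bar G(cx) = o(\bar H(x)) as x→∞ for every constant c>0, then H ∈ 𝒟 and L_H ≥ L_F. -/

import Mathlib

open MeasureTheory ProbabilityTheory Filter Topology Set

noncomputable section

namespace RWS

variable {Ω : Type} [MeasurableSpace Ω]

/-- The probability of an event, as a real number. -/
def pr (μ : Measure Ω) (s : Set Ω) : ℝ := (μ s).toReal

/-- The tail function `x ↦ P[X > x]` of a real-valued random variable `X`. -/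
def tail (μ : Measure Ω) (X : Ω → ℝ) (x : ℝ) : ℝ := pr μ {ω | X ω > x}

/-- The support of (the distribution of) a real-valued random variable. -/
def supp (μ : Measure Ω) (Θ : Ω → ℝ) : Set ℝ :=
  {θ : ℝ | ∀ δ > 0, 0 < μ {ω | Θ ω ∈ Icc (θ - δ) (θ + δ)}}

/-- `Θ` is non-degenerate at zero. -/
def NonDegAtZero (μ : Measure Ω) (Θ : Ω → ℝ) : Prop := 0 < μ {ω | Θ ω ≠ 0}

/-- `c` is the conditional probability of the event `A` given `Θ = θ`, defined as the limit
as `δ ↓ 0` of the probability of `A` conditioned on `Θ ∈ [θ-δ, θ+δ]`. -/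
def IsCondProb (μ : Measure Ω) (Θ : Ω → ℝ) (A : Set Ω) (θ c : ℝ) : Prop :=
  Tendsto (fun δ : ℝ =>
      pr μ (A ∩ {ω | Θ ω ∈ Icc (θ - δ) (θ + δ)}) / pr μ {ω | Θ ω ∈ Icc (θ - δ) (θ + δ)})
    (nhdsWithin 0 (Ioi 0)) (nhds c)

/-- `c` is the conditional probability of `A` given `Θi = θi, Θj = θj`, defined as the limit
as `δ ↓ 0` of the probability of `A` conditioned on `Θi ∈ [θi-δ, θi+δ], Θj ∈ [θj-δ, θj+δ]`. -/
def IsCondProb2 (μ : Measure Ω) (Θi Θj : Ω → ℝ) (A : Set Ω) (θi θj c : ℝ) : Prop :=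
  Tendsto (fun δ : ℝ =>
      pr μ (A ∩ {ω | Θi ω ∈ Icc (θi - δ) (θi + δ) ∧ Θj ω ∈ Icc (θj - δ) (θj + δ)}) /
        pr μ {ω | Θi ω ∈ Icc (θi - δ) (θi + δ) ∧ Θj ω ∈ Icc (θj - δ) (θj + δ)})
    (nhdsWithin 0 (Ioi 0)) (nhds c)

/-- The distribution of `X` under `μ` has a dominatedly varying tail (class `𝒟`). -/
def DomVar (μ : Measure Ω) (X : Ω → ℝ) : Prop :=
  ∀ b ∈ Ioo (0:ℝ) 1,
    IsBoundedUnder (· ≤ ·) atTop (fun x => tail μ X (b * x) / tail μ X x)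

/-- The distribution of `X` under `μ` is long-tailed (class `ℒ`). -/
def LongTail (μ : Measure Ω) (X : Ω → ℝ) : Prop :=
  ∀ a > (0:ℝ), Tendsto (fun x => tail μ X (x - a) / tail μ X x) atTop (nhds 1)

/-- The distribution of `X` under `μ` is consistently varying (class `𝒞`). -/
def ConsVar (μ : Measure Ω) (X : Ω → ℝ) : Prop :=
  Tendsto (fun v : ℝ => limsup (fun x => tail μ X (v * x) / tail μ X x) atTop)
    (nhdsWithin 1 (Iio 1)) (nhds 1)

/-- The distribution of `X` under `μ` is regularly varying with index `-α` (class `ℛ₋α`). -/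
def RegVar (μ : Measure Ω) (X : Ω → ℝ) (α : ℝ) : Prop :=
  ∀ b > (0:ℝ), Tendsto (fun x => tail μ X (b * x) / tail μ X x) atTop (nhds (b ^ (-α)))

/-- The `L`-index `L_F = lim_{v↓1} liminf_{x→∞} F̄(vx)/F̄(x)` of the distribution of `X`. -/
def Lindex (μ : Measure Ω) (X : Ω → ℝ) : ℝ :=
  limUnder (nhdsWithin 1 (Ioi 1))
    (fun v => liminf (fun x => tail μ X (v * x) / tail μ X x) atTop)

/-- `Xi` and `Xj` are tail asymptotically independent:
`P[|Xi| > xi | Xj > xj] → 0` as `xi ∧ xj → ∞`. -/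
def TAIpair (μ : Measure Ω) (Xi Xj : Ω → ℝ) : Prop :=
  Tendsto (fun p : ℝ × ℝ =>
      pr μ {ω | |Xi ω| > p.1 ∧ Xj ω > p.2} / pr μ {ω | Xj ω > p.2})
    (atTop ×ˢ atTop) (nhds 0)

/-- `Xi` and `Xj` are quasi-asymptotically independent. -/
def QAIpair (μ : Measure Ω) (Xi Xj : Ω → ℝ) : Prop :=
  Tendsto (fun x : ℝ =>
      pr μ {ω | max (Xi ω) 0 > x ∧ max (Xj ω) 0 > x} / (tail μ Xi x + tail μ Xj x))
    atTop (nhds 0) ∧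
  Tendsto (fun x : ℝ =>
      pr μ {ω | max (-Xi ω) 0 > x ∧ Xj ω > x} / (tail μ Xi x + tail μ Xj x))
    atTop (nhds 0)

/-- The requirements on an auxiliary function `b` from Assumption A1:
`b > 0`, `b(x) → ∞` and `b(x)/x → 0`. -/
def A1fun (b : ℝ → ℝ) : Prop :=
  (∀ x, 0 < b x) ∧ Tendsto b atTop atTop ∧ Tendsto (fun x => b x / x) atTop (nhds 0)

/-- The little-o condition of Assumption A1 for the ordered pair `(Xi, Θi), (Xj, Θj)`:
`P[Θi > bi(xi)] = o(P[Θi Xi > xi, Θj Xj > xj])` as `xi ∧ xj → ∞`. -/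
def A1pair (μ : Measure Ω) (Xi Θi Xj Θj : Ω → ℝ) (bi : ℝ → ℝ) : Prop :=
  Tendsto (fun p : ℝ × ℝ =>
      pr μ {ω | Θi ω > bi p.1} /
        pr μ {ω | Θi ω * Xi ω > p.1 ∧ Θj ω * Xj ω > p.2})
    (atTop ×ˢ atTop) (nhds 0)

/-- Assumption A2 for an ordered pair, with function `gij`:
`P[|Xi| > xi, Xj > xj | Θi = θi, Θj = θj] ~ gij(θi,θj) ⬝ P[|Xi| > xi, Xj > xj]`
as `xi ∧ xj → ∞`, uniformly over the supports. -/
def A2pair (μ : Measure Ω) (Xi Θi Xj Θj : Ω → ℝ) (gij : ℝ → ℝ → ℝ) : Prop :=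
  Measurable (Function.uncurry gij) ∧
  (∀ θi θj : ℝ, 0 ≤ θi → 0 ≤ θj → 0 < gij θi θj) ∧
  ∃ cp : ℝ → ℝ → ℝ → ℝ → ℝ,
    (∀ θi ∈ supp μ Θi, ∀ θj ∈ supp μ Θj, ∀ xi xj : ℝ,
      IsCondProb2 μ Θi Θj {ω | |Xi ω| > xi ∧ Xj ω > xj} θi θj (cp θi θj xi xj)) ∧
    TendstoUniformlyOn
      (fun (x : ℝ × ℝ) (θ : ℝ × ℝ) =>
        cp θ.1 θ.2 x.1 x.2 / (gij θ.1 θ.2 * pr μ {ω | |Xi ω| > x.1 ∧ Xj ω > x.2}))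
      (fun _ => 1) (atTop ×ˢ atTop) (supp μ Θi ×ˢ supp μ Θj)

/-- Assumption A3 (A3') for a single pair `(X, Θ)` with function `h`:
`P[X > x | Θ = θ] ~ h(θ) ⬝ P[X > x]` as `x → ∞`, uniformly over the support of `Θ`. -/
def A3' (μ : Measure Ω) (X Θ : Ω → ℝ) (h : ℝ → ℝ) : Prop :=
  (∀ θ : ℝ, 0 ≤ θ → 0 < h θ) ∧
  ∃ cp : ℝ → ℝ → ℝ,
    (∀ θ ∈ supp μ Θ, ∀ x : ℝ, IsCondProb μ Θ {ω | X ω > x} θ (cp θ x)) ∧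
    TendstoUniformlyOn (fun (x : ℝ) (θ : ℝ) => cp θ x / (h θ * tail μ X x))
      (fun _ => 1) atTop (supp μ Θ)

/-- The additional two-sided uniform asymptotic bounds of Assumption A4, for one ordered
pair, with constants `L ≤ U`:
`L gij(θi,θj) P[Xi > xi, Xj > xj] ≲ P[Xi > xi, Xj > xj | Θi = θi, Θj = θj]
   ≲ U gij(θi,θj) P[Xi > xi, Xj > xj]` as `xi ∧ xj → ∞`, uniformly over the supports. -/
def A4pair (μ : Measure Ω) (Xi Θi Xj Θj : Ω → ℝ) (gij : ℝ → ℝ → ℝ) (L U : ℝ) : Prop :=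
  ∃ cp : ℝ → ℝ → ℝ → ℝ → ℝ,
    (∀ θi ∈ supp μ Θi, ∀ θj ∈ supp μ Θj, ∀ xi xj : ℝ,
      IsCondProb2 μ Θi Θj {ω | Xi ω > xi ∧ Xj ω > xj} θi θj (cp θi θj xi xj)) ∧
    ∀ ε > (0:ℝ), ∀ᶠ x : ℝ × ℝ in atTop ×ˢ atTop,
      ∀ θi ∈ supp μ Θi, ∀ θj ∈ supp μ Θj,
        (1 - ε) * (L * (gij θi θj * pr μ {ω | Xi ω > x.1 ∧ Xj ω > x.2})) ≤
            cp θi θj x.1 x.2 ∧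
          cp θi θj x.1 x.2 ≤
            (1 + ε) * (U * (gij θi θj * pr μ {ω | Xi ω > x.1 ∧ Xj ω > x.2}))

/-- Assumption A1 for a finite family. -/
def A1 (μ : Measure Ω) {n : ℕ} (X Θ : Fin n → Ω → ℝ) (b : Fin n → ℝ → ℝ) : Prop :=
  (∀ i, A1fun (b i)) ∧
  ∀ i j, i ≠ j → A1pair μ (X i) (Θ i) (X j) (Θ j) (b i)

/-- Assumption A2 for a finite family. -/
def A2 (μ : Measure Ω) {n : ℕ} (X Θ : Fin n → Ω → ℝ)
    (g : Fin n → Fin n → ℝ → ℝ → ℝ) : Prop :=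
  ∀ i j, i ≠ j → A2pair μ (X i) (Θ i) (X j) (Θ j) (g i j)

/-- Assumption A3 for a finite family. -/
def A3 (μ : Measure Ω) {n : ℕ} (X Θ : Fin n → Ω → ℝ) (h : Fin n → ℝ → ℝ) : Prop :=
  ∀ i, A3' μ (X i) (Θ i) (h i)

/-- Assumption A4 for a finite family. -/
def A4 (μ : Measure Ω) {n : ℕ} (X Θ : Fin n → Ω → ℝ)
    (g : Fin n → Fin n → ℝ → ℝ → ℝ) : Prop :=
  A2 μ X Θ g ∧
  ∃ L U : ℝ, 0 < L ∧ L ≤ U ∧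
    ∀ i j, i ≠ j → A4pair μ (X i) (Θ i) (X j) (Θ j) (g i j) L U

/-- Pairwise tail asymptotic independence of a finite family. -/
def pTAI (μ : Measure Ω) {n : ℕ} (X : Fin n → Ω → ℝ) : Prop :=
  ∀ i j, i ≠ j → TAIpair μ (X i) (X j)

/-- Pairwise quasi-asymptotic independence of a finite family. -/
def pQAI (μ : Measure Ω) {n : ℕ} (X : Fin n → Ω → ℝ) : Prop :=
  ∀ i j, i ≠ j → QAIpair μ (X i) (X j)

/-- The randomly weighted and stopped sum `S_N^Θ`. -/
def SNsum (Θs Xs : ℕ → Ω → ℝ) (N : Ω → ℕ) (ω : Ω) : ℝ :=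
  ∑ i ∈ Finset.range (N ω), Θs i ω * Xs i ω

/-- The randomly stopped maximum of weighted sums `S_(N)^Θ` (equal to `0` when `N = 0`). -/
def SNmax (Θs Xs : ℕ → Ω → ℝ) (N : Ω → ℕ) (ω : Ω) : ℝ :=
  ⨆ k ∈ Finset.range (N ω), ∑ i ∈ Finset.range (k + 1), Θs i ω * Xs i ω

/-- The randomly stopped maximum of weighted summands `X_(N)^Θ` (equal to `0` when `N = 0`). -/
def XNmax (Θs Xs : ℕ → Ω → ℝ) (N : Ω → ℕ) (ω : Ω) : ℝ :=
  ⨆ i ∈ Finset.range (N ω), Θs i ω * Xs i ω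

/-!
By Lebesgue–Besicovitch differentiation, the conditional probabilities of Assumption A3' are
Radon–Nikodym densities of the joint law `P[X > u, Θ ∈ ·]` with respect to the law `G` of `Θ`.
Their uniform asymptotics `h(θ) F̄(u)` make `h` cancel in ratios: for large `u₁, u₂` the joint law
at level `u₁` is at most `(1 + η) F̄(u₁) / F̄(u₂)` times the one at level `u₂`. They also give
`G ≪ P[X > u, Θ ∈ ·]`, whence `H̄ > 0` eventually, as `Θ` is not degenerate at zero.

Slicing `Θ ∈ (0, εx]` into geometric shells, on each of which `ΘX` is compared with `X` at a fixed
level, turns an eventual bound `F̄(qu) ≤ K F̄(u)` into `H̄(bx) ≤ (1 + η) K H̄(x) + Ḡ(εx)` for every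
`b > q`, and `Ḡ(εx) = o(H̄(x))` absorbs the last term. With `F ∈ 𝒟` this gives `H ∈ 𝒟`. With
`F̄(u) ≤ a⁻¹ F̄(vru)` it gives `liminf H̄(vx)/H̄(x) ≥ liminf F̄(vrx)/F̄(x)`, and letting
`v = r ↓ 1` gives `L_H ≥ L_F`.
-/

open scoped ENNReal Function

lemma nonneg_of_mem_supp {μ : Measure Ω} {Θ : Ω → ℝ} (hΘ : ∀ ω, 0 ≤ Θ ω) {θ : ℝ}
    (hθ : θ ∈ supp μ Θ) : 0 ≤ θ := by
  by_contra! hneg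
  have hempty : {ω | Θ ω ∈ Icc (θ - -θ / 2) (θ + -θ / 2)} = ∅ :=
    eq_empty_of_forall_notMem fun ω hω => by linarith [hω.2, hΘ ω]
  have hpos := hθ (-θ / 2) (by linarith)
  rw [hempty, measure_empty] at hpos
  exact lt_irrefl 0 hpos

lemma support_map_subset_supp {μ : Measure Ω} {Θ : Ω → ℝ} (hΘm : Measurable Θ) :
    (μ.map Θ).support ⊆ supp μ Θ := by
  intro θ hθ δ hδ
  have := (Measure.mem_support_iff_forall θ).1 hθ (Icc (θ - δ) (θ + δ))
    (Icc_mem_nhds (by linarith) (by linarith))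
  rwa [Measure.map_apply hΘm measurableSet_Icc] at this

lemma ae_mem_supp (μ : Measure Ω) {Θ : Ω → ℝ} (hΘm : Measurable Θ) :
    ∀ᵐ θ ∂μ.map Θ, θ ∈ supp μ Θ :=
  mem_of_superset Measure.support_mem_ae (support_map_subset_supp hΘm)

lemma rnDeriv_map_restrict_ae_eq (μ : Measure Ω) [IsFiniteMeasure μ] {Θ : Ω → ℝ}
    (hΘm : Measurable Θ) {A : Set Ω} {c : ℝ → ℝ}
    (hc : ∀ θ ∈ supp μ Θ, IsCondProb μ Θ A θ (c θ)) :
    ∀ᵐ θ ∂μ.map Θ, ((μ.restrict A).map Θ).rnDeriv (μ.map Θ) θ = ENNReal.ofReal (c θ) := by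
  filter_upwards [Besicovitch.ae_tendsto_rnDeriv ((μ.restrict A).map Θ) (μ.map Θ),
    Measure.rnDeriv_lt_top ((μ.restrict A).map Θ) (μ.map Θ), ae_mem_supp μ hΘm]
    with θ hlim hfin hθ
  have hball : ∀ δ,
      (μ.restrict A).map Θ (Metric.closedBall θ δ) / μ.map Θ (Metric.closedBall θ δ) =
        μ (A ∩ {ω | Θ ω ∈ Icc (θ - δ) (θ + δ)}) / μ {ω | Θ ω ∈ Icc (θ - δ) (θ + δ)} := by
    intro δ
    rw [Real.closedBall_eq_Icc, Measure.map_apply hΘm measurableSet_Icc,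
      Measure.map_apply hΘm measurableSet_Icc, Measure.restrict_apply (hΘm measurableSet_Icc),
      inter_comm]
    rfl
  have hreal := (ENNReal.tendsto_toReal hfin.ne).comp hlim
  simp only [Function.comp_def, hball, ENNReal.toReal_div] at hreal
  rw [tendsto_nhds_unique (hc θ hθ) hreal, ENNReal.ofReal_toReal hfin.ne]

lemma exists_measure_gt_pos {μ : Measure Ω} {Θ : Ω → ℝ} (hΘnn : ∀ ω, 0 ≤ Θ ω)
    (hΘnd : NonDegAtZero μ Θ) :
    ∃ a > 0, 0 < μ {ω | Θ ω > a} := by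
  by_contra! hcon
  refine hΘnd.ne' (measure_mono_null (t := ⋃ n : ℕ, {ω | Θ ω > 1 / (n + 1)}) ?_
    (measure_iUnion_null fun n => nonpos_iff_eq_zero.1 (hcon _ Nat.one_div_pos_of_nat)))
  intro ω hω
  exact mem_iUnion.2 (exists_nat_one_div_lt (lt_of_le_of_ne (hΘnn ω) (Ne.symm hω)))

lemma tail_nonneg (μ : Measure Ω) (X : Ω → ℝ) (x : ℝ) : 0 ≤ tail μ X x :=
  ENNReal.toReal_nonneg

def jointTail (μ : Measure Ω) (X Θ : Ω → ℝ) (u : ℝ) : Measure ℝ :=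
  (μ.restrict {ω | X ω > u}).map Θ

instance isFiniteMeasure_jointTail {μ : Measure Ω} [IsFiniteMeasure μ] {X Θ : Ω → ℝ}
    {u : ℝ} : IsFiniteMeasure (jointTail μ X Θ u) := by
  unfold jointTail; infer_instance

section jointTail

variable {μ : Measure Ω} {X Θ : Ω → ℝ}

lemma jointTail_apply (hΘm : Measurable Θ) (u : ℝ) {S : Set ℝ} (hS : MeasurableSet S) :
    jointTail μ X Θ u S = μ ({ω | X ω > u} ∩ Θ ⁻¹' S) := by
  rw [jointTail, Measure.map_apply hΘm hS, Measure.restrict_apply (hΘm hS), inter_comm]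

lemma jointTail_absolutelyContinuous (hΘm : Measurable Θ) (u : ℝ) :
    jointTail μ X Θ u ≪ μ.map Θ :=
  Measure.absolutelyContinuous_of_le (Measure.map_mono Measure.restrict_le_self hΘm)

variable [IsFiniteMeasure μ] {h : ℝ → ℝ}

lemma A3'.eventually_ae_rnDeriv_jointTail_mem (hA3 : A3' μ X Θ h) (hΘm : Measurable Θ)
    (hΘnn : ∀ ω, 0 ≤ Θ ω) (hF : ∀ x : ℝ, 0 ≤ x → 0 < tail μ X x) {η : ℝ} (hη : 0 < η) :
    ∀ᶠ u in atTop, ∀ᵐ θ ∂μ.map Θ, (jointTail μ X Θ u).rnDeriv (μ.map Θ) θ ∈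
      Icc (ENNReal.ofReal ((1 - η) * (h θ * tail μ X u)))
        (ENNReal.ofReal ((1 + η) * (h θ * tail μ X u))) := by
  obtain ⟨hpos, cp, hcp, hunif⟩ := hA3
  filter_upwards [Metric.tendstoUniformlyOn_iff.mp hunif η hη, eventually_ge_atTop 0]
    with u hu hu0
  filter_upwards [ae_mem_supp μ hΘm, rnDeriv_map_restrict_ae_eq μ hΘm (hcp · · u)]
    with θ hθ hd
  have hb : 0 < h θ * tail μ X u := mul_pos (hpos θ (nonneg_of_mem_supp hΘnn hθ)) (hF u hu0)
  have hclose := hu θ hθ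
  rw [Real.dist_eq, abs_sub_lt_iff] at hclose
  have hlow : 1 - η < cp θ u / (h θ * tail μ X u) := by linarith [hclose.1]
  have hup : cp θ u / (h θ * tail μ X u) < 1 + η := by linarith [hclose.2]
  rw [lt_div_iff₀ hb] at hlow
  rw [div_lt_iff₀ hb] at hup
  rw [jointTail, hd]
  exact ⟨ENNReal.ofReal_le_ofReal hlow.le, ENNReal.ofReal_le_ofReal hup.le⟩

lemma A3'.jointTail_le_smul (hA3 : A3' μ X Θ h) (hΘm : Measurable Θ) (hΘnn : ∀ ω, 0 ≤ Θ ω)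
    (hF : ∀ x : ℝ, 0 ≤ x → 0 < tail μ X x) {c : ℝ} (hc : 1 < c) :
    ∃ Y, ∀ u₁ u₂, Y ≤ u₁ → Y ≤ u₂ →
      jointTail μ X Θ u₁ ≤
        ENNReal.ofReal (c * (tail μ X u₁ / tail μ X u₂)) • jointTail μ X Θ u₂ := by
  set η := (c - 1) / (c + 1)
  have hη : 0 < η := div_pos (by linarith) (by linarith)
  have hηc : η * (c + 1) = c - 1 := div_mul_cancel₀ _ (by linarith)
  obtain ⟨Y, hY⟩ := eventually_atTop.1 (hA3.eventually_ae_rnDeriv_jointTail_mem hΘm hΘnn hF hη)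
  refine ⟨max Y 0, fun u₁ u₂ h₁ h₂ => ?_⟩
  have hF₂ : 0 < tail μ X u₂ := hF u₂ (le_of_max_le_right h₂)
  have hk : 0 ≤ c * (tail μ X u₁ / tail μ X u₂) :=
    mul_nonneg (by linarith) (div_nonneg (tail_nonneg μ X u₁) hF₂.le)
  rw [← Measure.withDensity_rnDeriv_eq _ _ (jointTail_absolutelyContinuous hΘm u₁),
    ← Measure.withDensity_rnDeriv_eq _ _ (jointTail_absolutelyContinuous hΘm u₂),
    ← withDensity_smul _ (Measure.measurable_rnDeriv _ _)]
  refine withDensity_mono ?_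
  filter_upwards [hY u₁ (le_of_max_le_left h₁), hY u₂ (le_of_max_le_left h₂)]
    with θ hθ₁ hθ₂
  calc (jointTail μ X Θ u₁).rnDeriv (μ.map Θ) θ
      ≤ ENNReal.ofReal ((1 + η) * (h θ * tail μ X u₁)) := hθ₁.2
    _ = ENNReal.ofReal (c * (tail μ X u₁ / tail μ X u₂)) *
          ENNReal.ofReal ((1 - η) * (h θ * tail μ X u₂)) := by
      rw [← ENNReal.ofReal_mul hk]
      congr 1
      field_simp
      linear_combination (h θ * tail μ X u₁) * hηc
    _ ≤ _ := by rw [Pi.smul_apply, smul_eq_mul]; gcongr; exact hθ₂.1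

lemma A3'.eventually_map_absolutelyContinuous_jointTail (hA3 : A3' μ X Θ h)
    (hΘm : Measurable Θ) (hΘnn : ∀ ω, 0 ≤ Θ ω) (hF : ∀ x : ℝ, 0 ≤ x → 0 < tail μ X x) :
    ∀ᶠ u in atTop, μ.map Θ ≪ jointTail μ X Θ u := by
  filter_upwards [hA3.eventually_ae_rnDeriv_jointTail_mem hΘm hΘnn hF one_half_pos,
    eventually_ge_atTop 0] with u hu hu0
  rw [← Measure.withDensity_rnDeriv_eq _ _ (jointTail_absolutelyContinuous hΘm u)]
  refine withDensity_absolutelyContinuous' (Measure.measurable_rnDeriv _ _).aemeasurable ?_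
  filter_upwards [hu, ae_mem_supp μ hΘm] with θ hθ hsupp
  have hhθ := hA3.1 θ (nonneg_of_mem_supp hΘnn hsupp)
  have hFu := hF u hu0
  exact (lt_of_lt_of_le (ENNReal.ofReal_pos.2 (by positivity)) hθ.1).ne'

lemma A3'.eventually_tail_mul_pos (hA3 : A3' μ X Θ h) (hΘm : Measurable Θ)
    (hΘnn : ∀ ω, 0 ≤ Θ ω) (hΘnd : NonDegAtZero μ Θ) (hF : ∀ x : ℝ, 0 ≤ x → 0 < tail μ X x) :
    ∀ᶠ x in atTop, 0 < tail μ (fun ω => Θ ω * X ω) x := by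
  obtain ⟨a, ha, hGa⟩ := exists_measure_gt_pos hΘnn hΘnd
  obtain ⟨U, hU⟩ :=
    eventually_atTop.1 (hA3.eventually_map_absolutelyContinuous_jointTail hΘm hΘnn hF)
  filter_upwards [eventually_ge_atTop (a * max U 0)] with x hx
  have hu : max U 0 ≤ x / a := (le_div_iff₀' ha).2 hx
  have hpos : jointTail μ X Θ (x / a) (Ioi a) ≠ 0 := fun h0 => hGa.ne' (by
    have := hU _ (le_of_max_le_left hu) h0
    rwa [Measure.map_apply hΘm measurableSet_Ioi] at this)
  rw [jointTail_apply hΘm _ measurableSet_Ioi] at hpos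
  refine ENNReal.toReal_pos (fun h0 => hpos (measure_mono_null ?_ h0)) (measure_ne_top _ _)
  rintro ω ⟨hXω, hΘω⟩
  have hΘω : a < Θ ω := hΘω
  have hXω : x / a < X ω := hXω
  show x < Θ ω * X ω
  calc x = a * (x / a) := by field_simp
    _ ≤ Θ ω * (x / a) := by gcongr; exact le_of_max_le_right hu
    _ < Θ ω * X ω := by gcongr; linarith

end jointTail

lemma iUnion_Ioc_div_pow {a r : ℝ} (ha : 0 < a) (hr : 1 < r) :
    ⋃ k : ℕ, Ioc (a / r ^ (k + 1)) (a / r ^ k) = Ioc 0 a := by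
  ext θ
  simp only [mem_iUnion, mem_Ioc]
  constructor
  · rintro ⟨k, h₁, h₂⟩
    exact ⟨(by positivity : 0 < a / r ^ (k + 1)).trans h₁,
      h₂.trans (div_le_self ha.le (one_le_pow₀ hr.le))⟩
  · rintro ⟨hθ, hθa⟩
    obtain ⟨k, hk₁, hk₂⟩ := exists_nat_pow_near ((one_le_div hθ).2 hθa) hr
    refine ⟨k, ?_, ?_⟩
    · rw [div_lt_iff₀ (by positivity)]
      rwa [div_lt_iff₀ hθ, mul_comm] at hk₂
    · rw [le_div_iff₀ (by positivity)]
      rwa [le_div_iff₀ hθ, mul_comm] at hk₁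

lemma pairwise_disjoint_Ioc_div_pow {a r : ℝ} (ha : 0 ≤ a) (hr : 1 ≤ r) :
    Pairwise (Disjoint on fun k : ℕ => Ioc (a / r ^ (k + 1)) (a / r ^ k)) := by
  have hanti : Antitone fun k : ℕ => a / r ^ k := fun m n hmn =>
    div_le_div_of_nonneg_left ha (by positivity) (pow_le_pow_right₀ hr hmn)
  simpa only [Order.succ_eq_add_one] using hanti.pairwise_disjoint_on_Ioc_succ

lemma measure_inter_preimage_iUnion_le {μ : Measure Ω} {Θ : Ω → ℝ} (hΘm : Measurable Θ)
    {A B : Set Ω} (hB : MeasurableSet B) {S : ℕ → Set ℝ} (hSm : ∀ k, MeasurableSet (S k))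
    (hS : Pairwise (Disjoint on S)) {c : ℝ≥0∞}
    (h : ∀ k, μ (A ∩ Θ ⁻¹' S k) ≤ c * μ (B ∩ Θ ⁻¹' S k)) :
    μ (A ∩ Θ ⁻¹' ⋃ k, S k) ≤ c * μ (B ∩ Θ ⁻¹' ⋃ k, S k) := by
  have hBS : Pairwise (Disjoint on fun k => B ∩ Θ ⁻¹' S k) := fun i j hij =>
    ((hS hij).preimage Θ).mono inter_subset_right inter_subset_right
  rw [preimage_iUnion, inter_iUnion, inter_iUnion,
    measure_iUnion hBS fun k => hB.inter (hΘm (hSm k)), ← ENNReal.tsum_mul_left]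
  exact (measure_iUnion_le _).trans (ENNReal.tsum_le_tsum h)

omit [MeasurableSpace Ω] in
lemma mul_gt_subset_union {X Θ : Ω → ℝ} (hΘnn : ∀ ω, 0 ≤ Θ ω) {w t : ℝ} (hw : 0 < w) :
    {ω | Θ ω * X ω > w} ⊆ ({ω | Θ ω * X ω > w} ∩ Θ ⁻¹' Ioc 0 t) ∪ {ω | Θ ω > t} := by
  intro ω hω
  rcases le_or_gt (Θ ω) t with hle | hgt
  · refine Or.inl ⟨hω, lt_of_le_of_ne (hΘnn ω) fun h0 => ?_, hle⟩
    have hω : w < Θ ω * X ω := hω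
    rw [← h0, zero_mul] at hω
    linarith
  · exact Or.inr hgt

lemma measure_mul_gt_inter_shell_le {μ : Measure Ω} {X Θ : Ω → ℝ} (hΘm : Measurable Θ)
    {q r u₀ k w a : ℝ} (hq : 0 < q) (hr : 1 < r) (hu₀ : 0 < u₀) (ha : 0 < a)
    (hau : a * u₀ = r * w)
    (hcomp : ∀ u ≥ u₀, jointTail μ X Θ (q * u) ≤ ENNReal.ofReal k • jointTail μ X Θ u)
    (n : ℕ) :
    μ ({ω | Θ ω * X ω > q * r * w} ∩ Θ ⁻¹' Ioc (a / r ^ (n + 1)) (a / r ^ n)) ≤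
      ENNReal.ofReal k * μ ({ω | Θ ω * X ω > w} ∩ Θ ⁻¹' Ioc (a / r ^ (n + 1)) (a / r ^ n)) := by
  set u := u₀ * r ^ n
  have hu : u₀ ≤ u := le_mul_of_one_le_right hu₀.le (one_le_pow₀ hr.le)
  have h := hcomp u hu (Ioc (a / r ^ (n + 1)) (a / r ^ n))
  rw [Measure.smul_apply, smul_eq_mul, jointTail_apply hΘm _ measurableSet_Ioc,
    jointTail_apply hΘm _ measurableSet_Ioc] at h
  refine (measure_mono ?_).trans (h.trans (mul_le_mul' le_rfl (measure_mono ?_)))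
  · rintro ω ⟨hω, hΘω⟩
    refine ⟨?_, hΘω⟩
    have hΘpos : 0 < Θ ω := (by positivity : 0 < a / r ^ (n + 1)).trans hΘω.1
    have hω : q * r * w < Θ ω * X ω := hω
    show q * u < X ω
    refine lt_of_mul_lt_mul_left ?_ hΘpos.le
    calc Θ ω * (q * u) ≤ a / r ^ n * (q * u) := by gcongr; exact hΘω.2
      _ = q * (a * u₀) := by simp only [u]; field_simp
      _ < Θ ω * X ω := by rwa [hau, ← mul_assoc]
  · rintro ω ⟨hω, hΘω⟩
    refine ⟨?_, hΘω⟩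
    have hω : u < X ω := hω
    show w < Θ ω * X ω
    calc w = a / r ^ (n + 1) * u := by
          simp only [u]; field_simp; linear_combination (-r ^ n) * hau
      _ < Θ ω * X ω := mul_lt_mul'' hΘω.1 hω (by positivity) (by positivity)

lemma tail_mul_le_of_jointTail_le {μ : Measure Ω} [IsFiniteMeasure μ] {X Θ : Ω → ℝ}
    (hXm : Measurable X) (hΘm : Measurable Θ) (hΘnn : ∀ ω, 0 ≤ Θ ω) {q r u₀ k w : ℝ}
    (hq : 0 < q) (hr : 1 < r) (hu₀ : 0 < u₀) (hk : 0 ≤ k) (hw : 0 < w)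
    (hcomp : ∀ u ≥ u₀, jointTail μ X Θ (q * u) ≤ ENNReal.ofReal k • jointTail μ X Θ u) :
    tail μ (fun ω => Θ ω * X ω) (q * r * w) ≤
      k * tail μ (fun ω => Θ ω * X ω) w + pr μ {ω | Θ ω > r * w / u₀} := by
  have ha : 0 < r * w / u₀ := by positivity
  have hinner := measure_inter_preimage_iUnion_le hΘm
    (measurableSet_lt measurable_const (hΘm.mul hXm)) (fun _ => measurableSet_Ioc)
    (pairwise_disjoint_Ioc_div_pow ha.le hr.le)
    (measure_mul_gt_inter_shell_le hΘm hq hr hu₀ ha (div_mul_cancel₀ _ hu₀.ne') hcomp)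
  rw [iUnion_Ioc_div_pow ha hr] at hinner
  have hle : μ {ω | Θ ω * X ω > q * r * w} ≤
      ENNReal.ofReal k * μ {ω | Θ ω * X ω > w} + μ {ω | Θ ω > r * w / u₀} :=
    (measure_mono (mul_gt_subset_union hΘnn (by positivity))).trans <|
      (measure_union_le _ _).trans
        (add_le_add (hinner.trans (mul_le_mul' le_rfl (measure_mono inter_subset_left))) le_rfl)
  have hreal := ENNReal.toReal_mono (by finiteness) hle
  rwa [ENNReal.toReal_add (by finiteness) (measure_ne_top _ _), ENNReal.toReal_mul,
    ENNReal.toReal_ofReal hk] at hreal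

lemma DomVar.exists_eventually_tail_le {μ : Measure Ω} {X : Ω → ℝ} (hD : DomVar μ X)
    (hF : ∀ x : ℝ, 0 ≤ x → 0 < tail μ X x) {q : ℝ} (hq : q ∈ Ioo 0 1) :
    ∃ K, ∀ᶠ u in atTop, tail μ X (q * u) ≤ K * tail μ X u := by
  obtain ⟨K, hK⟩ := hD q hq
  refine ⟨K, ?_⟩
  filter_upwards [eventually_map.1 hK, eventually_ge_atTop 0] with u hu hu0
  exact (div_le_iff₀ (hF u hu0)).1 hu

def liminfRatio (μ : Measure Ω) (Z : Ω → ℝ) (v : ℝ) : ℝ :=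
  liminf (fun x => tail μ Z (v * x) / tail μ Z x) atTop

section liminfRatio

variable {μ : Measure Ω} (Z : Ω → ℝ)

lemma isBoundedUnder_ge_tail_ratio (v : ℝ) :
    IsBoundedUnder (· ≥ ·) atTop (fun x => tail μ Z (v * x) / tail μ Z x) :=
  isBoundedUnder_of_eventually_ge (.of_forall fun x => div_nonneg (tail_nonneg μ Z _)
    (tail_nonneg μ Z x))

variable [IsFiniteMeasure μ]

lemma tail_antitone : Antitone (tail μ Z) := fun _ _ hxy =>
  ENNReal.toReal_mono (measure_ne_top μ _) (measure_mono fun _ (hω : _ < _) => hxy.trans_lt hω)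

lemma eventually_tail_ratio_le_one {v : ℝ} (hv : 1 ≤ v) :
    ∀ᶠ x in atTop, tail μ Z (v * x) / tail μ Z x ≤ 1 := by
  filter_upwards [eventually_ge_atTop 0] with x hx
  exact div_le_one_of_le₀ (tail_antitone Z (le_mul_of_one_le_left hx hv)) (tail_nonneg μ Z x)

lemma antitoneOn_liminfRatio : AntitoneOn (liminfRatio μ Z) (Ioi 1) := by
  intro v hv w _ hvw
  refine liminf_le_liminf ?_ (isBoundedUnder_ge_tail_ratio Z w)
    (isBoundedUnder_of_eventually_le
      (eventually_tail_ratio_le_one Z (le_of_lt hv))).isCoboundedUnder_ge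
  filter_upwards [eventually_ge_atTop 0] with x hx
  exact div_le_div_of_nonneg_right (tail_antitone Z (mul_le_mul_of_nonneg_right hvw hx))
    (tail_nonneg μ Z x)

lemma tendsto_liminfRatio_Lindex : Tendsto (liminfRatio μ Z) (𝓝[>] 1) (𝓝 (Lindex μ Z)) := by
  have hbdd : BddAbove (liminfRatio μ Z '' Ioi 1) := by
    refine ⟨1, ?_⟩
    rintro _ ⟨v, hv, rfl⟩
    exact liminf_le_of_frequently_le (eventually_tail_ratio_le_one Z (le_of_lt hv)).frequently
      (isBoundedUnder_ge_tail_ratio Z v)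
  have h := (antitoneOn_liminfRatio Z).tendsto_nhdsGT hbdd
  show Tendsto _ _ (𝓝 (limUnder (𝓝[>] 1) (liminfRatio μ Z)))
  rwa [h.limUnder_eq]

end liminfRatio

section product

variable {μ : Measure Ω} [IsFiniteMeasure μ] {X Θ : Ω → ℝ} {h : ℝ → ℝ}

lemma A3'.exists_jointTail_le_smul (hA3 : A3' μ X Θ h) (hΘm : Measurable Θ)
    (hΘnn : ∀ ω, 0 ≤ Θ ω) (hF : ∀ x : ℝ, 0 ≤ x → 0 < tail μ X x) {q c K : ℝ} (hq : 0 < q)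
    (hc : 1 < c) (hK : ∀ᶠ u in atTop, tail μ X (q * u) ≤ K * tail μ X u) :
    ∃ u₀ > 0, ∀ u ≥ u₀,
      jointTail μ X Θ (q * u) ≤ ENNReal.ofReal (c * K) • jointTail μ X Θ u := by
  obtain ⟨Y, hY⟩ := hA3.jointTail_le_smul hΘm hΘnn hF hc
  obtain ⟨U, hU⟩ := eventually_atTop.1 hK
  refine ⟨max (max (Y / q) Y) (max U 1),
    lt_of_lt_of_le one_pos (le_max_of_le_right (le_max_right _ _)), fun u hu => ?_⟩
  have hYu : Y ≤ u := le_trans (le_max_of_le_left (le_max_right _ _)) hu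
  have hYqu : Y ≤ q * u :=
    (div_le_iff₀' hq).1 (le_trans (le_max_of_le_left (le_max_left _ _)) hu)
  have hUu : U ≤ u := le_trans (le_max_of_le_right (le_max_left _ _)) hu
  have hFu : 0 < tail μ X u :=
    hF u (zero_le_one.trans (le_trans (le_max_of_le_right (le_max_right _ _)) hu))
  refine (hY _ _ hYqu hYu).trans (IsOrderedSMul.smul_le_smul_right _ _ ?_ _)
  refine ENNReal.ofReal_le_ofReal (mul_le_mul_of_nonneg_left ?_ (by linarith))
  exact (div_le_iff₀ hFu).2 (hU u hUu)

lemma A3'.eventually_tail_mul_le (hA3 : A3' μ X Θ h) (hXm : Measurable X)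
    (hΘm : Measurable Θ) (hF : ∀ x : ℝ, 0 ≤ x → 0 < tail μ X x) (hΘnn : ∀ ω, 0 ≤ Θ ω)
    (hΘnd : NonDegAtZero μ Θ)
    (hG : ∀ c > (0:ℝ),
      Tendsto (fun x => pr μ {ω | Θ ω > c * x} / tail μ (fun ω => Θ ω * X ω) x)
        atTop (nhds 0))
    {q b K K' : ℝ} (hq : 0 < q) (hqb : q < b) (hKK' : K < K')
    (hK : ∀ᶠ u in atTop, tail μ X (q * u) ≤ K * tail μ X u) :
    ∀ᶠ x in atTop,
      tail μ (fun ω => Θ ω * X ω) (b * x) ≤ K' * tail μ (fun ω => Θ ω * X ω) x := by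
  have hK0 : 0 < K := by
    obtain ⟨u, hu, hu0⟩ := (hK.and (eventually_ge_atTop 0)).exists
    exact (pos_iff_pos_of_mul_pos ((hF _ (mul_nonneg hq.le hu0)).trans_le hu)).2 (hF u hu0)
  set c := (K + K') / (2 * K)
  have hc : 1 < c := by rw [one_lt_div (by positivity)]; linarith
  have hcK : c * K = (K + K') / 2 := by simp only [c]; field_simp
  obtain ⟨u₀, hu₀, hcomp⟩ := hA3.exists_jointTail_le_smul hΘm hΘnn hF hq hc hK
  set r := b / q
  have hr : 1 < r := (one_lt_div hq).2 hqb
  have hqr : q * r = b := mul_div_cancel₀ b hq.ne'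
  have hδ : 0 < (K' - K) / 2 := by linarith
  filter_upwards [hA3.eventually_tail_mul_pos hΘm hΘnn hΘnd hF,
    (hG (r / u₀) (by positivity)).eventually_lt_const hδ, eventually_gt_atTop 0]
    with x hHx hGx hx
  have hsplit := tail_mul_le_of_jointTail_le hXm hΘm hΘnn hq hr hu₀ (by positivity) hx hcomp
  rw [hqr, hcK, show r * x / u₀ = r / u₀ * x by ring] at hsplit
  rw [div_lt_iff₀ hHx] at hGx
  linarith

lemma A3'.liminfRatio_le_liminfRatio_mul (hA3 : A3' μ X Θ h) (hXm : Measurable X)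
    (hΘm : Measurable Θ) (hF : ∀ x : ℝ, 0 ≤ x → 0 < tail μ X x) (hΘnn : ∀ ω, 0 ≤ Θ ω)
    (hΘnd : NonDegAtZero μ Θ)
    (hG : ∀ c > (0:ℝ),
      Tendsto (fun x => pr μ {ω | Θ ω > c * x} / tail μ (fun ω => Θ ω * X ω) x)
        atTop (nhds 0))
    {v r : ℝ} (hv : 1 < v) (hr : 1 < r) :
    liminfRatio μ X (v * r) ≤ liminfRatio μ (fun ω => Θ ω * X ω) v := by
  have hv0 : 0 < v := one_pos.trans hv
  have hvr : 0 < v * r := by positivity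
  have hcob := (isBoundedUnder_of_eventually_le
    (eventually_tail_ratio_le_one (μ := μ) (fun ω => Θ ω * X ω) hv.le)).isCoboundedUnder_ge
  refine le_of_forall_lt_imp_le_of_dense fun c hc => ?_
  rcases le_or_gt c 0 with hc0 | hc0
  · exact le_liminf_of_le hcob (.of_forall fun x =>
      hc0.trans (div_nonneg (tail_nonneg μ _ _) (tail_nonneg μ _ x)))
  obtain ⟨a, hca, ha⟩ := exists_between hc
  have ha0 : 0 < a := hc0.trans hca
  have hK : ∀ᶠ u in atTop, tail μ X ((v * r)⁻¹ * u) ≤ a⁻¹ * tail μ X u := by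
    filter_upwards [(tendsto_id.const_mul_atTop (inv_pos.2 hvr)).eventually
      ((eventually_lt_of_lt_liminf ha (isBoundedUnder_ge_tail_ratio X _)).and
        (eventually_ge_atTop 0))] with u hu
    obtain ⟨hu, hu0⟩ := hu
    rw [id, mul_inv_cancel_left₀ hvr.ne'] at hu
    rw [le_inv_mul_iff₀ ha0]
    exact ((lt_div_iff₀ (hF _ hu0)).1 hu).le
  have hH := hA3.eventually_tail_mul_le hXm hΘm hF hΘnn hΘnd hG (inv_pos.2 hvr)
    ((inv_lt_inv₀ hvr hv0).2 (lt_mul_of_one_lt_right hv0 hr)) ((inv_lt_inv₀ ha0 hc0).2 hca) hK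
  refine le_liminf_of_le hcob ?_
  filter_upwards [(tendsto_id.const_mul_atTop hv0).eventually hH,
    hA3.eventually_tail_mul_pos hΘm hΘnn hΘnd hF] with x hx hpos
  rw [id, inv_mul_cancel_left₀ hv0.ne', le_inv_mul_iff₀ hc0] at hx
  exact (le_div_iff₀ hpos).2 hx

lemma A3'.Lindex_le_Lindex_mul (hA3 : A3' μ X Θ h) (hXm : Measurable X)
    (hΘm : Measurable Θ) (hF : ∀ x : ℝ, 0 ≤ x → 0 < tail μ X x) (hΘnn : ∀ ω, 0 ≤ Θ ω)
    (hΘnd : NonDegAtZero μ Θ)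
    (hG : ∀ c > (0:ℝ),
      Tendsto (fun x => pr μ {ω | Θ ω > c * x} / tail μ (fun ω => Θ ω * X ω) x)
        atTop (nhds 0)) :
    Lindex μ X ≤ Lindex μ (fun ω => Θ ω * X ω) := by
  have hsq : Tendsto (fun s : ℝ => s * s) (𝓝[>] 1) (𝓝[>] 1) :=
    tendsto_nhdsWithin_iff.2
      ⟨((continuous_id.mul continuous_id).tendsto' 1 1 (mul_one 1)).mono_left nhdsWithin_le_nhds,
        eventually_nhdsWithin_of_forall fun s (hs : 1 < s) => one_lt_mul_of_lt_of_le hs hs.le⟩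
  refine le_of_tendsto_of_tendsto ((tendsto_liminfRatio_Lindex X).comp hsq)
    (tendsto_liminfRatio_Lindex _) ?_
  filter_upwards [self_mem_nhdsWithin] with s hs
  exact hA3.liminfRatio_le_liminfRatio_mul hXm hΘm hF hΘnn hΘnd hG hs hs

lemma A3'.domVar_mul (hA3 : A3' μ X Θ h) (hXm : Measurable X)
    (hΘm : Measurable Θ) (hF : ∀ x : ℝ, 0 ≤ x → 0 < tail μ X x) (hD : DomVar μ X)
    (hΘnn : ∀ ω, 0 ≤ Θ ω) (hΘnd : NonDegAtZero μ Θ)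
    (hG : ∀ c > (0:ℝ),
      Tendsto (fun x => pr μ {ω | Θ ω > c * x} / tail μ (fun ω => Θ ω * X ω) x)
        atTop (nhds 0)) :
    DomVar μ (fun ω => Θ ω * X ω) := by
  intro b hb
  obtain ⟨K, hK⟩ := hD.exists_eventually_tail_le hF (q := b / 2)
    ⟨half_pos hb.1, by linarith [hb.2]⟩
  refine ⟨K + 1, eventually_map.2 ?_⟩
  filter_upwards [hA3.eventually_tail_mul_le hXm hΘm hF hΘnn hΘnd hG (half_pos hb.1)
      (half_lt_self hb.1) (lt_add_one K) hK,
    hA3.eventually_tail_mul_pos hΘm hΘnn hΘnd hF] with x hx hpos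
  exact (div_le_iff₀ hpos).2 hx

end product

/-- Lemma 3: if `F ∈ 𝒟`, Assumption A3' holds and `Ḡ(cx) = o(H̄(x))` for
every `c > 0`, where `H` is the distribution of `ΘX`, then `H ∈ 𝒟` and `L_H ≥ L_F`. -/
theorem statement_13
    (μ : Measure Ω) [IsProbabilityMeasure μ]
    (X Θ : Ω → ℝ)
    (hXm : Measurable X) (hΘm : Measurable Θ)
    (hF : ∀ x : ℝ, 0 ≤ x → 0 < tail μ X x)
    (hD : DomVar μ X)
    (hΘnn : ∀ ω, 0 ≤ Θ ω) (hΘnd : NonDegAtZero μ Θ)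
    (h : ℝ → ℝ) (hA3 : A3' μ X Θ h)
    (hG : ∀ c > (0:ℝ),
      Tendsto (fun x => pr μ {ω | Θ ω > c * x} / tail μ (fun ω => Θ ω * X ω) x)
        atTop (nhds 0)) :
    DomVar μ (fun ω => Θ ω * X ω) ∧
      Lindex μ X ≤ Lindex μ (fun ω => Θ ω * X ω) :=
  ⟨hA3.domVar_mul hXm hΘm hF hD hΘnn hΘnd hG, hA3.Lindex_le_Lindex_mul hXm hΘm hF hΘnn hΘnd hG⟩

end RWS
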